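/- Let s ∈ {0,1}, κ ∈ ℂ, λ ∈ ℂ. Let σ : ℝ → ℂ be twice differentiable and y : ℝ → ℂ be three times differentiable. Define y⁽⁰⁾ = y, y⁽¹⁾ = y' + (s+κ)σy, y⁽²⁾ = (y⁽¹⁾)' + (3κ²/2 + s²/2 + 2κs)σ²y − 2κσy⁽¹⁾, and let Y = (y⁽⁰⁾, y⁽¹⁾, y⁽²⁾)ᵀ. Then Y'(x) = (F(σ)(x) + Λ(λ))·Y(x) for all x ∈ ℝ if and only if y'''(x) + 2s·σ'(x)·y'(x) + (s+κ)·σ''(x)·y(x) = λ·y(x) for all x ∈ ℝ (i.e., the equation ℓ_{σ,s,κ}(y) = λy, where ℓ_{σ,s,κ}(y) = y''' + s(σ'y)' + sσ'y' + κσ''y). -/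

import Mathlib

/-- The matrix F(σ) associated with the differential expression
ℓ_{σ,s,κ}(y) = y''' + s(σ'y)' + sσ'y' + κσ''y. -/
noncomputable def Fmat (s κ : ℂ) (σ : ℝ → ℂ) (x : ℝ) : Matrix (Fin 3) (Fin 3) ℂ :=
  !![ -(s + κ) * σ x, 1, 0;
      -(3 * κ ^ 2 / 2 + s ^ 2 / 2 + 2 * κ * s) * σ x ^ 2, 2 * κ * σ x, 1;
      κ * (κ ^ 2 - s ^ 2) * σ x ^ 3,
        -(3 * κ ^ 2 / 2 + s ^ 2 / 2 - 2 * κ * s) * σ x ^ 2, (s - κ) * σ x ]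

/-- The matrix Λ(λ) with entry λ at position (3,1) and zeros elsewhere. -/
noncomputable def Lam (lam : ℂ) : Matrix (Fin 3) (Fin 3) ℂ :=
  !![0, 0, 0; 0, 0, 0; lam, 0, 0]

/-- The first quasi-derivative: y⁽¹⁾ = y' + (s+κ)σy. -/
noncomputable def qd1 (s κ : ℂ) (σ y : ℝ → ℂ) : ℝ → ℂ :=
  fun x => deriv y x + (s + κ) * σ x * y x

/-- The second quasi-derivative:
y⁽²⁾ = (y⁽¹⁾)' + (3κ²/2 + s²/2 + 2κs)σ²y − 2κσy⁽¹⁾. -/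
noncomputable def qd2 (s κ : ℂ) (σ y : ℝ → ℂ) : ℝ → ℂ :=
  fun x => deriv (qd1 s κ σ y) x
    + (3 * κ ^ 2 / 2 + s ^ 2 / 2 + 2 * κ * s) * σ x ^ 2 * y x
    - 2 * κ * σ x * qd1 s κ σ y x

/-! The first two rows of the system are the definitions of `qd1` and `qd2` rearranged, so they
hold for every `y`. Expanding `qd2 = y'' + (s+κ)σ'y + (s-κ)σy' + (s²-κ²)/2 σ²y` and
differentiating, the third row becomes `ℓ_{σ,s,κ}(y) = λy` after all terms in `σ²y'` and `σ³y`
cancel identically in `s` and `κ`. -/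

theorem deriv_vecCons_three_apply {f g h : ℝ → ℂ} (x : ℝ) (i : Fin 3) :
    deriv (fun t => ![f t, g t, h t] i) x = ![deriv f x, deriv g x, deriv h x] i := by
  fin_cases i <;> rfl

section QuasiDerivatives

variable (s κ : ℂ) {σ y : ℝ → ℂ} {x : ℝ}

theorem hasDerivAt_qd1 (hσ : DifferentiableAt ℝ σ x) (hy : DifferentiableAt ℝ y x)
    (hy' : DifferentiableAt ℝ (deriv y) x) :
    HasDerivAt (qd1 s κ σ y)
      (deriv (deriv y) x + (s + κ) * (deriv σ x * y x + σ x * deriv y x)) x := by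
  refine (hy'.hasDerivAt.add ((hσ.hasDerivAt.mul hy.hasDerivAt).const_mul (s + κ)))
    |>.congr_of_eventuallyEq (.of_forall fun t => ?_)
  simp only [qd1, Pi.add_apply, Pi.mul_apply]
  ring

theorem qd2_apply (hσ : DifferentiableAt ℝ σ x) (hy : DifferentiableAt ℝ y x)
    (hy' : DifferentiableAt ℝ (deriv y) x) :
    qd2 s κ σ y x = deriv (deriv y) x + (s + κ) * deriv σ x * y x + (s - κ) * σ x * deriv y x
      + (s ^ 2 - κ ^ 2) / 2 * σ x ^ 2 * y x := by
  simp only [qd2, (hasDerivAt_qd1 s κ hσ hy hy').deriv, qd1]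
  ring

theorem hasDerivAt_qd2 (hσ : Differentiable ℝ σ) (hσ' : Differentiable ℝ (deriv σ))
    (hy : Differentiable ℝ y) (hy' : Differentiable ℝ (deriv y))
    (hy'' : Differentiable ℝ (deriv (deriv y))) (x : ℝ) :
    HasDerivAt (qd2 s κ σ y)
      (deriv (deriv (deriv y)) x + (s + κ) * deriv (deriv σ) x * y x
        + 2 * s * deriv σ x * deriv y x + (s - κ) * σ x * deriv (deriv y) x
        + (s ^ 2 - κ ^ 2) * σ x * deriv σ x * y x
        + (s ^ 2 - κ ^ 2) / 2 * σ x ^ 2 * deriv y x) x := by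
  have hqd2 : qd2 s κ σ y = fun t => deriv (deriv y) t + (s + κ) * (deriv σ t * y t)
      + (s - κ) * (σ t * deriv y t) + (s ^ 2 - κ ^ 2) / 2 * (σ t * σ t * y t) := by
    funext t
    rw [qd2_apply s κ (hσ t) (hy t) (hy' t)]
    ring
  have hσx := (hσ x).hasDerivAt
  have hyx := (hy x).hasDerivAt
  rw [hqd2]
  refine ((((hy'' x).hasDerivAt.add (((hσ' x).hasDerivAt.mul hyx).const_mul (s + κ))).add
    ((hσx.mul (hy' x).hasDerivAt).const_mul (s - κ))).add
    (((hσx.mul hσx).mul hyx).const_mul ((s ^ 2 - κ ^ 2) / 2))).congr_deriv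
    (by simp only [Pi.mul_apply]; ring)

theorem deriv_eq_neg_add_qd1 (x : ℝ) : deriv y x = -(s + κ) * σ x * y x + qd1 s κ σ y x := by
  simp only [qd1]
  ring

theorem deriv_qd1_eq (x : ℝ) :
    deriv (qd1 s κ σ y) x = -(3 * κ ^ 2 / 2 + s ^ 2 / 2 + 2 * κ * s) * σ x ^ 2 * y x
      + 2 * κ * σ x * qd1 s κ σ y x + qd2 s κ σ y x := by
  simp only [qd2]
  ring

theorem deriv_qd2_sub_eq (hσ : Differentiable ℝ σ) (hσ' : Differentiable ℝ (deriv σ))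
    (hy : Differentiable ℝ y) (hy' : Differentiable ℝ (deriv y))
    (hy'' : Differentiable ℝ (deriv (deriv y))) (lam : ℂ) (x : ℝ) :
    deriv (qd2 s κ σ y) x - ((κ * (κ ^ 2 - s ^ 2) * σ x ^ 3 + lam) * y x
        - (3 * κ ^ 2 / 2 + s ^ 2 / 2 - 2 * κ * s) * σ x ^ 2 * qd1 s κ σ y x
        + (s - κ) * σ x * qd2 s κ σ y x)
      = deriv (deriv (deriv y)) x + 2 * s * deriv σ x * deriv y x
          + (s + κ) * deriv (deriv σ) x * y x - lam * y x := by
  rw [(hasDerivAt_qd2 s κ hσ hσ' hy hy' hy'' x).deriv, qd2_apply s κ (hσ x) (hy x) (hy' x)]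
  simp only [qd1]
  ring

end QuasiDerivatives

theorem Fmat_add_Lam_mulVec (s κ lam : ℂ) (σ : ℝ → ℂ) (x : ℝ) (a b c : ℂ) :
    (Fmat s κ σ x + Lam lam).mulVec ![a, b, c] =
      ![-(s + κ) * σ x * a + b,
        -(3 * κ ^ 2 / 2 + s ^ 2 / 2 + 2 * κ * s) * σ x ^ 2 * a + 2 * κ * σ x * b + c,
        (κ * (κ ^ 2 - s ^ 2) * σ x ^ 3 + lam) * a
          - (3 * κ ^ 2 / 2 + s ^ 2 / 2 - 2 * κ * s) * σ x ^ 2 * b + (s - κ) * σ x * c] := by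
  ext i
  fin_cases i <;> simp [Fmat, Lam, Matrix.mulVec, dotProduct, Fin.sum_univ_three]
  ring

theorem system_iff_thirdOrder_eq_general (s : ℂ) (κ lam : ℂ) (σ y : ℝ → ℂ)
    (hσ1 : Differentiable ℝ σ) (hσ2 : Differentiable ℝ (deriv σ))
    (hy1 : Differentiable ℝ y) (hy2 : Differentiable ℝ (deriv y))
    (hy3 : Differentiable ℝ (deriv (deriv y))) :
    (∀ (x : ℝ) (i : Fin 3),
        deriv (fun t => ![y t, qd1 s κ σ y t, qd2 s κ σ y t] i) x
          = ((Fmat s κ σ x + Lam lam).mulVec ![y x, qd1 s κ σ y x, qd2 s κ σ y x]) i)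
    ↔ (∀ x : ℝ,
        deriv (deriv (deriv y)) x + 2 * s * deriv σ x * deriv y x
          + (s + κ) * deriv (deriv σ) x * y x = lam * y x) := by
  simp only [deriv_vecCons_three_apply, Fmat_add_Lam_mulVec, Fin.forall_fin_succ,
    IsEmpty.forall_iff, Matrix.cons_val_zero, Matrix.cons_val_succ, and_true,
    ← deriv_eq_neg_add_qd1, ← deriv_qd1_eq, true_and]
  refine forall_congr' fun x => ?_
  rw [← sub_eq_zero, deriv_qd2_sub_eq s κ hσ1 hσ2 hy1 hy2 hy3, sub_eq_zero]

/-- For s ∈ {0,1}, κ, λ ∈ ℂ, σ twice differentiable and y three times differentiable,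
the vector Y = (y, y⁽¹⁾, y⁽²⁾)ᵀ of quasi-derivatives solves the first-order system
Y' = (F(σ) + Λ(λ))Y if and only if y solves the equation ℓ_{σ,s,κ}(y) = λy, i.e.
y''' + 2sσ'y' + (s+κ)σ''y = λy. -/
theorem system_iff_thirdOrder_eq (s : ℂ) (hs : s = 0 ∨ s = 1) (κ lam : ℂ) (σ y : ℝ → ℂ)
    (hσ1 : Differentiable ℝ σ) (hσ2 : Differentiable ℝ (deriv σ))
    (hy1 : Differentiable ℝ y) (hy2 : Differentiable ℝ (deriv y))
    (hy3 : Differentiable ℝ (deriv (deriv y))) :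
    (∀ (x : ℝ) (i : Fin 3),
        deriv (fun t => ![y t, qd1 s κ σ y t, qd2 s κ σ y t] i) x
          = ((Fmat s κ σ x + Lam lam).mulVec ![y x, qd1 s κ σ y x, qd2 s κ σ y x]) i)
    ↔ (∀ x : ℝ,
        deriv (deriv (deriv y)) x + 2 * s * deriv σ x * deriv y x
          + (s + κ) * deriv (deriv σ) x * y x = lam * y x) :=
  system_iff_thirdOrder_eq_general s κ lam σ y hσ1 hσ2 hy1 hy2 hy3
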